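/- Let k ≥ 3 be an odd integer. Let X and Y be independent random variables, each uniformly distributed on a k-element alphabet, let Z = 1 if X = Y and Z = 0 otherwise, and set U = (X, Z), V = (Y, Z). Then for every finite-valued random variable Q on the same probability space with I(U ; V | Q) = 0, it holds that H(U | Q) + H(V | Q) ≤ (1 − 1/k) · log((k² − 1)/4). -/

import Mathlib

open MeasureTheory ProbabilityTheory Real
open scoped ENNReal

/-- The probability that the random variable `X` takes the value `x`. -/
noncomputable def pm {Ω S : Type*} [MeasurableSpace Ω] (μ : Measure Ω) (X : Ω → S) (x : S) : ℝ :=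
  (μ (X ⁻¹' {x})).toReal

/-- Shannon entropy (with natural logarithm) of a finite-valued random variable. -/
noncomputable def entH {Ω S : Type*} [MeasurableSpace Ω] [Fintype S]
    (μ : Measure Ω) (X : Ω → S) : ℝ :=
  ∑ x : S, Real.negMulLog (pm μ X x)

/-- Conditional entropy `H(X | Y)`. -/
noncomputable def condEnt {Ω S T : Type*} [MeasurableSpace Ω] [Fintype S] [Fintype T]
    (μ : Measure Ω) (X : Ω → S) (Y : Ω → T) : ℝ :=
  entH μ (fun ω => (X ω, Y ω)) - entH μ Y

/-- Mutual information `I(X ; Y)`. -/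
noncomputable def mutInf {Ω S T : Type*} [MeasurableSpace Ω] [Fintype S] [Fintype T]
    (μ : Measure Ω) (X : Ω → S) (Y : Ω → T) : ℝ :=
  entH μ X + entH μ Y - entH μ (fun ω => (X ω, Y ω))

/-- Conditional mutual information `I(X ; Y | Z)`. -/
noncomputable def condMutInf {Ω S T U : Type*} [MeasurableSpace Ω] [Fintype S] [Fintype T]
    [Fintype U] (μ : Measure Ω) (X : Ω → S) (Y : Ω → T) (Z : Ω → U) : ℝ :=
  entH μ (fun ω => (X ω, Z ω)) + entH μ (fun ω => (Y ω, Z ω))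
    - entH μ (fun ω => ((X ω, Y ω), Z ω)) - entH μ Z

/-!
Conditioning on a value `q` of `Q` of positive probability, `I(U ; V | Q) = 0` makes `U` and
`V` independent. The indicator `Z` is a function of `U` and of `V`, so it is then independent
of itself, i.e. constant given `Q = q`. If it equals `1`, then `X = Y` with `X` and `Y`
independent, so both are constant and `H(U | q) = H(V | q) = 0`. If it equals `0`, then `X` and
`Y` are independent with `P(X = Y) = 0`, so their supports are disjoint, of sizes `m + n ≤ k`,
and `H(U | q) + H(V | q) ≤ log m + log n ≤ log ((k² - 1) / 4)` because `k` is odd. Averaging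
over `q`, the second case has total weight `P(Z = 0) = 1 - 1/k`.
-/

open Finset InformationTheory

lemma mul_klFun_div {p q : ℝ} (hpq : q = 0 → p = 0) :
    q * klFun (p / q) = p * log (p / q) + q - p := by
  rcases eq_or_ne q 0 with rfl | hq
  · simp [hpq rfl]
  · rw [klFun]
    field_simp

lemma mul_klFun_div_nonneg {p q : ℝ} (hp : 0 ≤ p) (hq : 0 ≤ q) : 0 ≤ q * klFun (p / q) :=
  mul_nonneg hq (klFun_nonneg (div_nonneg hp hq))

section Distribution

variable {Ω S T : Type*} [MeasurableSpace Ω] {μ : Measure Ω} {X : Ω → S} {Y : Ω → T}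

lemma pm_nonneg (μ : Measure Ω) (X : Ω → S) (x : S) : 0 ≤ pm μ X x := ENNReal.toReal_nonneg

lemma pm_pair (X : Ω → S) (Y : Ω → T) (x : S) (y : T) :
    pm μ (fun ω => (X ω, Y ω)) (x, y) = μ.real (X ⁻¹' {x} ∩ Y ⁻¹' {y}) := by
  rw [pm, ← Set.singleton_prod_singleton, Set.mk_preimage_prod, measureReal_def]

lemma pm_pair_comm (X : Ω → S) (Y : Ω → T) (x : S) (y : T) :
    pm μ (fun ω => (X ω, Y ω)) (x, y) = pm μ (fun ω => (Y ω, X ω)) (y, x) := by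
  rw [pm_pair, pm_pair, Set.inter_comm]

lemma pm_pair_le_left [IsFiniteMeasure μ] (X : Ω → S) (Y : Ω → T) (x : S) (y : T) :
    pm μ (fun ω => (X ω, Y ω)) (x, y) ≤ pm μ X x := by
  rw [pm_pair]
  exact measureReal_mono Set.inter_subset_left

lemma pm_pair_le_right [IsFiniteMeasure μ] (X : Ω → S) (Y : Ω → T) (x : S) (y : T) :
    pm μ (fun ω => (X ω, Y ω)) (x, y) ≤ pm μ Y y := by
  rw [pm_pair_comm]
  exact pm_pair_le_left Y X y x

lemma pm_pair_eq_zero_of_mul_eq_zero [IsFiniteMeasure μ] {x : S} {y : T}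
    (h : pm μ X x * pm μ Y y = 0) : pm μ (fun ω => (X ω, Y ω)) (x, y) = 0 := by
  rcases mul_eq_zero.1 h with h | h
  · exact le_antisymm (h ▸ pm_pair_le_left X Y x y) (pm_nonneg _ _ _)
  · exact le_antisymm (h ▸ pm_pair_le_right X Y x y) (pm_nonneg _ _ _)

lemma sum_pm [Fintype S] [MeasurableSpace S] [MeasurableSingletonClass S]
    [IsProbabilityMeasure μ] (hX : Measurable X) : ∑ x, pm μ X x = 1 := by
  simpa [pm, ← measureReal_def] using sum_measureReal_preimage_singleton (μ := μ) univ
    (fun x _ => hX (measurableSet_singleton x))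

lemma sum_pm_pair_right [Fintype T] [MeasurableSpace T] [MeasurableSingletonClass T]
    [IsFiniteMeasure μ] (X : Ω → S) (hY : Measurable Y) (x : S) :
    ∑ y, pm μ (fun ω => (X ω, Y ω)) (x, y) = pm μ X x := by
  have h := sum_measureReal_preimage_singleton (μ := μ.restrict (X ⁻¹' {x})) univ
    (fun y _ => hY (measurableSet_singleton y))
  simp only [measureReal_restrict_apply (hY (measurableSet_singleton _)), coe_univ,
    Set.preimage_univ, Set.univ_inter, measureReal_restrict_apply MeasurableSet.univ] at h
  simp only [pm_pair, Set.inter_comm (X ⁻¹' {x})]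
  exact h

lemma sum_pm_pair_left [Fintype S] [MeasurableSpace S] [MeasurableSingletonClass S]
    [IsFiniteMeasure μ] (hX : Measurable X) (Y : Ω → T) (y : T) :
    ∑ x, pm μ (fun ω => (X ω, Y ω)) (x, y) = pm μ Y y := by
  simp only [pm_pair_comm X Y _ y, sum_pm_pair_right Y hX]

lemma isProbabilityMeasure_cond_of_pm_ne_zero {y : T} (h : pm μ Y y ≠ 0) :
    IsProbabilityMeasure μ[|Y ⁻¹' {y}] :=
  cond_isProbabilityMeasure_of_finite (ENNReal.toReal_ne_zero.1 h).1 (ENNReal.toReal_ne_zero.1 h).2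

lemma pm_pair_eq_pm_mul_pm_cond [MeasurableSpace T] [MeasurableSingletonClass T]
    [IsFiniteMeasure μ] (X : Ω → S) (hY : Measurable Y) (x : S) (y : T) :
    pm μ (fun ω => (X ω, Y ω)) (x, y) = pm μ Y y * pm μ[|Y ⁻¹' {y}] X x := by
  rw [pm_pair, pm, pm, ← ENNReal.toReal_mul, mul_comm,
    cond_mul_eq_inter (hY (measurableSet_singleton y)), Set.inter_comm, measureReal_def]

lemma sum_pm_mul_pm_cond [Fintype T] [MeasurableSpace T] [MeasurableSingletonClass T]
    [IsFiniteMeasure μ] (X : Ω → S) (hY : Measurable Y) (x : S) :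
    ∑ y, pm μ Y y * pm μ[|Y ⁻¹' {y}] X x = pm μ X x := by
  simp only [← pm_pair_eq_pm_mul_pm_cond X hY, sum_pm_pair_right X hY]

lemma ProbabilityTheory.IndepFun.pm_pair_eq_mul [MeasurableSpace S] [MeasurableSingletonClass S]
    [MeasurableSpace T] [MeasurableSingletonClass T] (h : IndepFun X Y μ) (x : S) (y : T) :
    pm μ (fun ω => (X ω, Y ω)) (x, y) = pm μ X x * pm μ Y y := by
  rw [pm_pair, measureReal_def, h.measure_inter_preimage_eq_mul _ _ (measurableSet_singleton x)
    (measurableSet_singleton y), ENNReal.toReal_mul, pm, pm]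

open scoped Classical in
noncomputable def pmSupport [Fintype S] (μ : Measure Ω) (X : Ω → S) : Finset S :=
  {x | pm μ X x ≠ 0}

lemma mem_pmSupport [Fintype S] {x : S} : x ∈ pmSupport μ X ↔ pm μ X x ≠ 0 := by
  simp [pmSupport]

lemma pmSupport_nonempty [Fintype S] [MeasurableSpace S] [MeasurableSingletonClass S]
    [IsProbabilityMeasure μ] (hX : Measurable X) : (pmSupport μ X).Nonempty := by
  obtain ⟨x, -, hx⟩ := exists_ne_zero_of_sum_ne_zero (s := univ) (f := pm μ X)
    (by rw [sum_pm hX]; exact one_ne_zero)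
  exact ⟨x, mem_pmSupport.2 hx⟩

lemma pmSupport_pair_subset [Fintype S] [Fintype T] [IsFiniteMeasure μ] :
    pmSupport μ (fun ω => (X ω, Y ω)) ⊆ pmSupport μ X ×ˢ pmSupport μ Y := by
  rintro ⟨x, y⟩ hxy
  have hpos := (pm_nonneg _ _ _).lt_of_ne' (mem_pmSupport.1 hxy)
  simp only [mem_product, mem_pmSupport]
  exact ⟨(hpos.trans_le (pm_pair_le_left X Y x y)).ne',
    (hpos.trans_le (pm_pair_le_right X Y x y)).ne'⟩

lemma card_pmSupport_le_one_of_indepFun_self [Fintype S] [MeasurableSpace S]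
    [MeasurableSingletonClass S] (h : IndepFun X X μ) : #(pmSupport μ X) ≤ 1 := by
  refine card_le_one.2 fun x hx x' hx' => ?_
  by_contra hne
  have hprod := h.pm_pair_eq_mul x x'
  rw [pm_pair, ← Set.preimage_inter, Set.singleton_inter_eq_empty.2 (by simpa using hne),
    Set.preimage_empty, measureReal_empty, eq_comm, mul_eq_zero] at hprod
  exact hprod.elim (mem_pmSupport.1 hx) (mem_pmSupport.1 hx')

lemma card_pmSupport_le_one_of_mul_eq_zero [Fintype T] [MeasurableSpace T]
    [MeasurableSingletonClass T] [IsProbabilityMeasure μ] (hY : Measurable Y) {X : Ω → T}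
    (h : ∀ x y, x ≠ y → pm μ X x * pm μ Y y = 0) : #(pmSupport μ X) ≤ 1 := by
  obtain ⟨y, hy⟩ := pmSupport_nonempty (μ := μ) hY
  have hxy : ∀ x ∈ pmSupport μ X, x = y := fun x hx => by
    by_contra hne
    exact mul_ne_zero (mem_pmSupport.1 hx) (mem_pmSupport.1 hy) (h x y hne)
  exact card_le_one.2 fun x hx x' hx' => (hxy x hx).trans (hxy x' hx').symm

lemma entH_le_log_card_pmSupport [Fintype S] [MeasurableSpace S] [MeasurableSingletonClass S]
    [IsProbabilityMeasure μ] (hX : Measurable X) : entH μ X ≤ log #(pmSupport μ X) := by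
  have hsupp : ∀ f : S → ℝ, (∀ x, pm μ X x = 0 → f x = 0) →
      ∑ x ∈ pmSupport μ X, f x = ∑ x, f x := fun f hf =>
    sum_subset (subset_univ _) fun x _ hx => hf x (by simpa [mem_pmSupport] using hx)
  have hpos : ∀ x ∈ pmSupport μ X, 0 < pm μ X x := fun x hx =>
    (pm_nonneg _ X x).lt_of_ne' (mem_pmSupport.1 hx)
  have jensen := strictConcaveOn_log_Ioi.concaveOn.le_map_sum (t := pmSupport μ X)
    (w := pm μ X) (p := fun x => (pm μ X x)⁻¹) (fun x hx => (hpos x hx).le)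
    (by rw [hsupp _ fun _ h => h, sum_pm hX]) fun x hx => inv_pos.2 (hpos x hx)
  simp only [smul_eq_mul, log_inv] at jensen
  rw [sum_congr rfl fun x hx => mul_inv_cancel₀ (hpos x hx).ne', sum_const, nsmul_one] at jensen
  rw [entH, ← hsupp _ fun _ h => by simp [h]]
  simpa [negMulLog] using jensen

end Distribution

section Information

variable {Ω S T : Type*} [MeasurableSpace Ω] {μ : Measure Ω} {X : Ω → S} {Y : Ω → T}
  [Fintype S] [MeasurableSpace S] [MeasurableSingletonClass S]
  [Fintype T] [MeasurableSpace T] [MeasurableSingletonClass T]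

lemma entH_pair_le_log_card_add_log_card [IsProbabilityMeasure μ] (hX : Measurable X)
    (hY : Measurable Y) :
    entH μ (fun ω => (X ω, Y ω)) ≤ log #(pmSupport μ X) + log #(pmSupport μ Y) := by
  have hXY : Measurable fun ω => (X ω, Y ω) := hX.prodMk hY
  rw [← log_mul (by simp [(pmSupport_nonempty hX).ne_empty])
    (by simp [(pmSupport_nonempty hY).ne_empty]), ← Nat.cast_mul, ← card_product]
  refine (entH_le_log_card_pmSupport hXY).trans (log_le_log ?_ ?_)
  · exact_mod_cast (pmSupport_nonempty hXY).card_pos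
  · exact_mod_cast card_le_card (pmSupport_pair_subset (X := X) (Y := Y))

lemma mutInf_eq_sum_mul_log_div [IsFiniteMeasure μ] (hX : Measurable X) (hY : Measurable Y) :
    mutInf μ X Y = ∑ p : S × T, pm μ (fun ω => (X ω, Y ω)) p *
      log (pm μ (fun ω => (X ω, Y ω)) p / (pm μ X p.1 * pm μ Y p.2)) := by
  set J := pm μ (fun ω => (X ω, Y ω))
  have hterm : ∀ p : S × T, J p * log (J p / (pm μ X p.1 * pm μ Y p.2)) =
      -negMulLog (J p) - J p * log (pm μ X p.1) - J p * log (pm μ Y p.2) := by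
    rintro ⟨x, y⟩
    by_cases h : pm μ X x * pm μ Y y = 0
    · simp [J, pm_pair_eq_zero_of_mul_eq_zero h]
    · have hxy := mul_ne_zero_iff.1 h
      by_cases h0 : J (x, y) = 0
      · simp [h0]
      · rw [log_div h0 h, log_mul hxy.1 hxy.2, negMulLog]
        ring
  have hJX : ∑ p : S × T, J p * log (pm μ X p.1) = -entH μ X := by
    rw [entH, ← sum_neg_distrib, Fintype.sum_prod_type]
    refine sum_congr rfl fun x _ => ?_
    simp only [← sum_mul]
    rw [sum_pm_pair_right X hY, negMulLog, neg_mul, neg_neg]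
  have hJY : ∑ p : S × T, J p * log (pm μ Y p.2) = -entH μ Y := by
    rw [entH, ← sum_neg_distrib, Fintype.sum_prod_type_right]
    refine sum_congr rfl fun y _ => ?_
    simp only [← sum_mul]
    rw [sum_pm_pair_left hX Y, negMulLog, neg_mul, neg_neg]
  rw [sum_congr rfl fun p _ => hterm p, sum_sub_distrib, sum_sub_distrib, sum_neg_distrib, hJX,
    hJY, mutInf]
  simp only [entH, J]
  ring

-- Since `klFun ≥ 0` vanishes only at `1`, this form gives `I(X ; Y) ≥ 0` and its equality case.
lemma mutInf_eq_sum_mul_klFun [IsProbabilityMeasure μ] (hX : Measurable X) (hY : Measurable Y) :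
    mutInf μ X Y = ∑ p : S × T, pm μ X p.1 * pm μ Y p.2 *
      klFun (pm μ (fun ω => (X ω, Y ω)) p / (pm μ X p.1 * pm μ Y p.2)) := by
  have hprod : ∑ p : S × T, pm μ X p.1 * pm μ Y p.2 = 1 := by
    rw [Fintype.sum_prod_type, ← Fintype.sum_mul_sum, sum_pm hX, sum_pm hY, one_mul]
  rw [sum_congr rfl fun p _ => mul_klFun_div fun h => pm_pair_eq_zero_of_mul_eq_zero h,
    sum_sub_distrib, sum_add_distrib, hprod, sum_pm (hX.prodMk hY),
    mutInf_eq_sum_mul_log_div hX hY]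
  ring

lemma mutInf_nonneg [IsProbabilityMeasure μ] (hX : Measurable X) (hY : Measurable Y) :
    0 ≤ mutInf μ X Y := by
  rw [mutInf_eq_sum_mul_klFun hX hY]
  exact sum_nonneg fun p _ =>
    mul_klFun_div_nonneg (pm_nonneg _ _ _) (mul_nonneg (pm_nonneg μ X p.1) (pm_nonneg μ Y p.2))

lemma indepFun_of_pm_pair_eq_mul [IsFiniteMeasure μ] (hX : Measurable X) (hY : Measurable Y)
    (h : ∀ x y, pm μ (fun ω => (X ω, Y ω)) (x, y) = pm μ X x * pm μ Y y) :
    IndepFun X Y μ := by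
  rw [indepFun_iff_map_prod_eq_prod_map_map hX.aemeasurable hY.aemeasurable]
  refine Measure.ext_of_singleton fun ⟨x, y⟩ => ?_
  rw [← Set.singleton_prod_singleton, Measure.prod_prod, Set.singleton_prod_singleton,
    Measure.map_apply (hX.prodMk hY) (measurableSet_singleton _),
    Measure.map_apply hX (measurableSet_singleton _),
    Measure.map_apply hY (measurableSet_singleton _),
    ← ENNReal.toReal_eq_toReal_iff' (measure_ne_top _ _)
      (ENNReal.mul_ne_top (measure_ne_top _ _) (measure_ne_top _ _)), ENNReal.toReal_mul]
  exact h x y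

lemma indepFun_of_mutInf_eq_zero [IsProbabilityMeasure μ] (hX : Measurable X) (hY : Measurable Y)
    (h : mutInf μ X Y = 0) : IndepFun X Y μ := by
  refine indepFun_of_pm_pair_eq_mul hX hY fun x y => ?_
  rw [mutInf_eq_sum_mul_klFun hX hY] at h
  have hterm := (sum_eq_zero_iff_of_nonneg fun p _ => mul_klFun_div_nonneg (pm_nonneg _ _ _)
    (mul_nonneg (pm_nonneg μ X p.1) (pm_nonneg μ Y p.2))).1 h (x, y) (mem_univ _)
  rcases mul_eq_zero.1 hterm with h0 | h0
  · rw [h0]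
    exact pm_pair_eq_zero_of_mul_eq_zero h0
  · rw [klFun_eq_zero_iff (div_nonneg (pm_nonneg _ _ _)
      (mul_nonneg (pm_nonneg μ X x) (pm_nonneg μ Y y)))] at h0
    exact (div_eq_one_iff_eq fun h' => by simp [h'] at h0).1 h0

lemma condEnt_eq_sum_pm_mul_entH_cond [IsFiniteMeasure μ] (hX : Measurable X)
    (hY : Measurable Y) : condEnt μ X Y = ∑ y, pm μ Y y * entH μ[|Y ⁻¹' {y}] X := by
  have hfiber : ∀ y, ∑ x, negMulLog (pm μ (fun ω => (X ω, Y ω)) (x, y)) =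
      negMulLog (pm μ Y y) + pm μ Y y * entH μ[|Y ⁻¹' {y}] X := fun y => by
    simp only [pm_pair_eq_pm_mul_pm_cond X hY, negMulLog_mul, sum_add_distrib, ← sum_mul,
      ← mul_sum, entH]
    by_cases hy : pm μ Y y = 0
    · simp [hy]
    · have := isProbabilityMeasure_cond_of_pm_ne_zero hy
      rw [sum_pm hX, one_mul]
  rw [condEnt, entH, Fintype.sum_prod_type_right, sum_congr rfl fun y _ => hfiber y,
    sum_add_distrib, entH]
  ring

variable {U : Type*} [Fintype U] [MeasurableSpace U] [MeasurableSingletonClass U] {Z : Ω → U}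

lemma condMutInf_eq_sum_pm_mul_mutInf_cond [IsFiniteMeasure μ] (hX : Measurable X)
    (hY : Measurable Y) (hZ : Measurable Z) :
    condMutInf μ X Y Z = ∑ z, pm μ Z z * mutInf μ[|Z ⁻¹' {z}] X Y := by
  have hcondEnt : condMutInf μ X Y Z =
      condEnt μ X Z + condEnt μ Y Z - condEnt μ (fun ω => (X ω, Y ω)) Z := by
    rw [condMutInf, condEnt, condEnt, condEnt]
    ring
  rw [hcondEnt, condEnt_eq_sum_pm_mul_entH_cond hX hZ, condEnt_eq_sum_pm_mul_entH_cond hY hZ,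
    condEnt_eq_sum_pm_mul_entH_cond (hX.prodMk hY) hZ, ← sum_add_distrib, ← sum_sub_distrib]
  simp only [mutInf, mul_sub, mul_add]

lemma indepFun_cond_of_condMutInf_eq_zero [IsFiniteMeasure μ] (hX : Measurable X)
    (hY : Measurable Y) (hZ : Measurable Z) (h : condMutInf μ X Y Z = 0) {z : U}
    (hz : pm μ Z z ≠ 0) : IndepFun X Y μ[|Z ⁻¹' {z}] := by
  have hterm_nonneg : ∀ z, 0 ≤ pm μ Z z * mutInf μ[|Z ⁻¹' {z}] X Y := fun z => by
    by_cases hz : pm μ Z z = 0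
    · simp [hz]
    · have := isProbabilityMeasure_cond_of_pm_ne_zero hz
      exact mul_nonneg (pm_nonneg _ _ _) (mutInf_nonneg hX hY)
  rw [condMutInf_eq_sum_pm_mul_mutInf_cond hX hY hZ] at h
  have := isProbabilityMeasure_cond_of_pm_ne_zero hz
  refine indepFun_of_mutInf_eq_zero hX hY ?_
  exact (mul_eq_zero.1 ((sum_eq_zero_iff_of_nonneg fun z _ => hterm_nonneg z).1 h z
    (mem_univ z))).resolve_left hz

end Information

lemma four_mul_mul_add_one_le_sq {m n k : ℕ} (hk : Odd k) (h : m + n ≤ k) :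
    4 * m * n + 1 ≤ k ^ 2 := by
  obtain ⟨j, rfl⟩ := hk
  rcases le_or_gt m j with hm | hm <;> nlinarith

lemma log_card_add_log_card_le_of_disjoint {A : Type*} [Fintype A] {k : ℕ}
    (hA : Fintype.card A = k) (hk : Odd k) {s t : Finset A} (hs : s.Nonempty)
    (ht : t.Nonempty) (hst : Disjoint s t) :
    log #s + log #t ≤ log (((k : ℝ) ^ 2 - 1) / 4) := by
  have hcard : 4 * #s * #t + 1 ≤ k ^ 2 :=
    four_mul_mul_add_one_le_sq hk (hA ▸ card_disjUnion s t hst ▸ card_le_univ _)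
  rw [← log_mul (by simp [hs.ne_empty]) (by simp [ht.ne_empty])]
  refine log_le_log (by simp [hs.card_pos, ht.card_pos]) ?_
  rw [le_div_iff₀ (by norm_num)]
  have : ((4 * #s * #t + 1 : ℕ) : ℝ) ≤ ((k ^ 2 : ℕ) : ℝ) := by exact_mod_cast hcard
  push_cast at this
  linarith

section EqualityFunction

variable {Ω A : Type*} [MeasurableSpace Ω] [DecidableEq A] {X Y : Ω → A}

def eqIndicator (X Y : Ω → A) (ω : Ω) : Fin 2 := if X ω = Y ω then 1 else 0

lemma measurable_eqIndicator [MeasurableSpace A] [MeasurableSingletonClass A] [Countable A]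
    (hX : Measurable X) (hY : Measurable Y) : Measurable (eqIndicator X Y) :=
  Measurable.ite (measurableSet_eq_fun hX hY) measurable_const measurable_const

lemma pm_pair_le_pm_eqIndicator {μ : Measure Ω} [IsFiniteMeasure μ] (a b : A) :
    pm μ (fun ω => (X ω, Y ω)) (a, b) ≤ pm μ (eqIndicator X Y) (if a = b then 1 else 0) := by
  rw [pm_pair]
  refine measureReal_mono fun ω ⟨ha, hb⟩ => ?_
  simp_all [eqIndicator]

lemma pm_eqIndicator_zero [Fintype A] [MeasurableSpace A] [MeasurableSingletonClass A]
    {μ : Measure Ω} [IsProbabilityMeasure μ] {k : ℕ} (hA : Fintype.card A = k)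
    (hX : Measurable X) (hY : Measurable Y) (hXY : IndepFun X Y μ)
    (hXunif : ∀ a : A, μ (X ⁻¹' {a}) = (k : ℝ≥0∞)⁻¹)
    (hYunif : ∀ a : A, μ (Y ⁻¹' {a}) = (k : ℝ≥0∞)⁻¹) :
    pm μ (eqIndicator X Y) 0 = 1 - 1 / k := by
  have hdiag : ∀ a, pm μ (fun ω => (eqIndicator X Y ω, X ω)) (1, a) = 1 / k ^ 2 := fun a => by
    have hset : eqIndicator X Y ⁻¹' {1} ∩ X ⁻¹' {a} = X ⁻¹' {a} ∩ Y ⁻¹' {a} := by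
      ext ω
      simp only [Set.mem_inter_iff, Set.mem_preimage, Set.mem_singleton_iff, eqIndicator]
      split_ifs with h <;> grind
    rw [pm_pair, hset, ← pm_pair, hXY.pm_pair_eq_mul, pm, pm, hXunif, hYunif]
    simp [sq]
  have hsum := sum_pm (μ := μ) (measurable_eqIndicator hX hY)
  rw [Fin.sum_univ_two, ← sum_pm_pair_right (eqIndicator X Y) hX 1,
    sum_congr rfl fun a _ => hdiag a, sum_const, card_univ, hA, nsmul_eq_mul] at hsum
  obtain ⟨ω⟩ := nonempty_of_isProbabilityMeasure μ
  have : Nonempty A := ⟨X ω⟩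
  have hk : (k : ℝ) ≠ 0 := by
    rw [← hA, Nat.cast_ne_zero]
    exact Fintype.card_ne_zero
  field_simp at hsum ⊢
  linarith

lemma entH_add_entH_le_of_indepFun [Fintype A] [MeasurableSpace A] [MeasurableSingletonClass A]
    {ν : Measure Ω} [IsProbabilityMeasure ν] {k : ℕ} (hA : Fintype.card A = k) (hk : Odd k)
    (hX : Measurable X) (hY : Measurable Y)
    (hUV : IndepFun (fun ω => (X ω, eqIndicator X Y ω))
      (fun ω => (Y ω, eqIndicator X Y ω)) ν) :
    entH ν (fun ω => (X ω, eqIndicator X Y ω)) + entH ν (fun ω => (Y ω, eqIndicator X Y ω))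
      ≤ pm ν (eqIndicator X Y) 0 * log (((k : ℝ) ^ 2 - 1) / 4) := by
  set Z := eqIndicator X Y
  have hZ : Measurable Z := measurable_eqIndicator hX hY
  have hXY : IndepFun X Y ν := hUV.comp measurable_fst measurable_fst
  have hZcard : #(pmSupport ν Z) ≤ 1 :=
    card_pmSupport_le_one_of_indepFun_self (hUV.comp measurable_snd measurable_snd)
  have hlogZ : log #(pmSupport ν Z) ≤ 0 :=
    log_nonpos (Nat.cast_nonneg _) (by exact_mod_cast hZcard)
  have hU := entH_pair_le_log_card_add_log_card (μ := ν) hX hZ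
  have hV := entH_pair_le_log_card_add_log_card (μ := ν) hY hZ
  have hnull : ∀ a b z, pm ν Z z = 0 → (if a = b then 1 else 0) = z →
      pm ν X a * pm ν Y b = 0 := fun a b z hz hab => by
    rw [← hXY.pm_pair_eq_mul]
    exact le_antisymm (hz ▸ hab ▸ pm_pair_le_pm_eqIndicator a b) (pm_nonneg _ _ _)
  by_cases h0 : pm ν Z 0 = 0
  · have hX1 := card_pmSupport_le_one_of_mul_eq_zero hY fun a b hab =>
      hnull a b 0 h0 (if_neg hab)
    have hY1 := card_pmSupport_le_one_of_mul_eq_zero hX fun a b hab =>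
      (mul_comm _ _).trans (hnull b a 0 h0 (if_neg (Ne.symm hab)))
    have hlogX := log_nonpos (Nat.cast_nonneg _) (Nat.cast_le_one.2 hX1)
    have hlogY := log_nonpos (Nat.cast_nonneg _) (Nat.cast_le_one.2 hY1)
    rw [h0, zero_mul]
    linarith
  · have h1 : pm ν Z 1 = 0 := by
      by_contra h1
      exact zero_ne_one (card_le_one.1 hZcard 0 (mem_pmSupport.2 h0) 1 (mem_pmSupport.2 h1))
    have hZ0 : pm ν Z 0 = 1 := by
      simpa [Fin.sum_univ_two, h1] using sum_pm (μ := ν) hZ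
    have hdisj : Disjoint (pmSupport ν X) (pmSupport ν Y) := disjoint_left.2 fun a ha hb =>
      mul_ne_zero (mem_pmSupport.1 ha) (mem_pmSupport.1 hb) (hnull a a 1 h1 (if_pos rfl))
    have := log_card_add_log_card_le_of_disjoint hA hk (pmSupport_nonempty hX)
      (pmSupport_nonempty hY) hdisj
    rw [hZ0, one_mul]
    linarith

end EqualityFunction

theorem odd_k_EQ_wyner_upper_bound_general
    {Ω : Type*} [MeasurableSpace Ω] (μ : Measure Ω) [IsProbabilityMeasure μ]
    (k : ℕ) (hk : Odd k)
    {A : Type*} [Fintype A] [DecidableEq A]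
    [MeasurableSpace A] [MeasurableSingletonClass A] (hA : Fintype.card A = k)
    (X Y : Ω → A) (hX : Measurable X) (hY : Measurable Y)
    (hindep : IndepFun X Y μ)
    (hXunif : ∀ a : A, μ (X ⁻¹' {a}) = (k : ℝ≥0∞)⁻¹)
    (hYunif : ∀ a : A, μ (Y ⁻¹' {a}) = (k : ℝ≥0∞)⁻¹)
    (Z : Ω → Fin 2) (hZ : Z = fun ω => if X ω = Y ω then 1 else 0)
    {T : Type*} [Fintype T] [MeasurableSpace T] [MeasurableSingletonClass T]
    (Q : Ω → T) (hQ : Measurable Q)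
    (hQci : condMutInf μ (fun ω => (X ω, Z ω)) (fun ω => (Y ω, Z ω)) Q = 0) :
    condEnt μ (fun ω => (X ω, Z ω)) Q + condEnt μ (fun ω => (Y ω, Z ω)) Q
      ≤ (1 - 1 / (k : ℝ)) * Real.log (((k : ℝ) ^ 2 - 1) / 4) := by
  change Z = eqIndicator X Y at hZ
  subst hZ
  have hU := hX.prodMk (measurable_eqIndicator hX hY)
  have hV := hY.prodMk (measurable_eqIndicator hX hY)
  rw [condEnt_eq_sum_pm_mul_entH_cond hU hQ, condEnt_eq_sum_pm_mul_entH_cond hV hQ,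
    ← sum_add_distrib, ← pm_eqIndicator_zero hA hX hY hindep hXunif hYunif,
    ← sum_pm_mul_pm_cond _ hQ, sum_mul]
  refine sum_le_sum fun q _ => ?_
  by_cases hq : pm μ Q q = 0
  · simp [hq]
  · have := isProbabilityMeasure_cond_of_pm_ne_zero hq
    rw [← mul_add, mul_assoc]
    exact mul_le_mul_of_nonneg_left (entH_add_entH_le_of_indepFun hA hk hX hY
      (indepFun_cond_of_condMutInf_eq_zero hU hV hQ hQci hq)) (pm_nonneg _ _ _)

/-- `k`-ary EQ, `k` odd: with `U = (X,Z)`, `V = (Y,Z)`, every finite-valued `Q` with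
`I(U ; V | Q) = 0` satisfies `H(U|Q) + H(V|Q) ≤ (1 − 1/k) log ((k² − 1)/4)`. -/
theorem odd_k_EQ_wyner_upper_bound
    {Ω : Type*} [MeasurableSpace Ω] (μ : Measure Ω) [IsProbabilityMeasure μ]
    (k : ℕ) (hk : Odd k) (hk2 : 3 ≤ k)
    {A : Type*} [Fintype A] [DecidableEq A]
    [MeasurableSpace A] [MeasurableSingletonClass A] (hA : Fintype.card A = k)
    (X Y : Ω → A) (hX : Measurable X) (hY : Measurable Y)
    (hindep : IndepFun X Y μ)
    (hXunif : ∀ a : A, μ (X ⁻¹' {a}) = (k : ℝ≥0∞)⁻¹)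
    (hYunif : ∀ a : A, μ (Y ⁻¹' {a}) = (k : ℝ≥0∞)⁻¹)
    (Z : Ω → Fin 2) (hZ : Z = fun ω => if X ω = Y ω then 1 else 0)
    {T : Type*} [Fintype T] [MeasurableSpace T] [MeasurableSingletonClass T]
    (Q : Ω → T) (hQ : Measurable Q)
    (hQci : condMutInf μ (fun ω => (X ω, Z ω)) (fun ω => (Y ω, Z ω)) Q = 0) :
    condEnt μ (fun ω => (X ω, Z ω)) Q + condEnt μ (fun ω => (Y ω, Z ω)) Q
      ≤ (1 - 1 / (k : ℝ)) * Real.log (((k : ℝ) ^ 2 - 1) / 4) :=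
  odd_k_EQ_wyner_upper_bound_general μ k hk hA X Y hX hY hindep hXunif hYunif Z hZ Q hQ hQci
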